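/- There exist δ > 0 and C > 0 such that for every real k with 0 < k < δ one has |ρ₀(k) − (4μ/(3(λ+2μ)) − (5λ+2μ)·k_p²/(15(λ+2μ)))| ≤ C·k³. -/

import Mathlib

open Complex

/-- Spherical Bessel function of the first kind (series definition). -/
noncomputable def jb (n : ℕ) (z : ℂ) : ℂ :=
  ∑' p : ℕ, ((-1 : ℂ) ^ p * z ^ (n + 2 * p)) /
    ((2 : ℂ) ^ p * (Nat.factorial p : ℂ) * ∏ q ∈ Finset.range (n + p + 1), (2 * (q : ℂ) + 1))

/-- Spherical Bessel function of the second kind (series definition). -/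
noncomputable def yb (n : ℕ) (z : ℂ) : ℂ :=
  -((Nat.factorial (2 * n) : ℂ) / ((2 : ℂ) ^ n * (Nat.factorial n : ℂ))) *
    ∑' p : ℕ, ((-1 : ℂ) ^ p * z ^ (2 * (p : ℤ) - (n : ℤ) - 1)) /
      ((2 : ℂ) ^ p * (Nat.factorial p : ℂ) *
        ∏ q ∈ Finset.Icc 1 p, (-2 * (n : ℂ) + 2 * (q : ℂ) - 1))

/-- Spherical Hankel function of the first kind. -/
noncomputable def hb (n : ℕ) (z : ℂ) : ℂ := jb n z + Complex.I * yb n z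

noncomputable def xiB (n : ℕ) (z : ℂ) : ℂ := -Complex.I * z * jb n z * hb n z

noncomputable def zetaB (n : ℕ) (z : ℂ) : ℂ :=
  1 / 2 - Complex.I * z ^ 2 * deriv (jb n) z * hb n z

/-- Pressure wavenumber k_p = k/√(λ+2μ), as a complex number. -/
noncomputable def kpC (lam mu k : ℝ) : ℂ := ((k / Real.sqrt (lam + 2 * mu) : ℝ) : ℂ)

/-- η₀(k) = −i k_p j₁(k_p) h₁(k_p)/(λ+2μ). -/
noncomputable def eta0 (lam mu : ℝ) (k : ℝ) : ℂ :=
  -Complex.I * kpC lam mu k * jb 1 (kpC lam mu k) * hb 1 (kpC lam mu k) /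
    ((lam : ℂ) + 2 * (mu : ℂ))

/-- ρ₀(k) = i(4μ k_p j₁(k_p)h₁(k_p)/(λ+2μ) − k_p² j₁(k_p)h₀(k_p)). -/
noncomputable def rho0 (lam mu : ℝ) (k : ℝ) : ℂ :=
  Complex.I * (4 * (mu : ℂ) * kpC lam mu k * jb 1 (kpC lam mu k) * hb 1 (kpC lam mu k) /
      ((lam : ℂ) + 2 * (mu : ℂ)) -
    (kpC lam mu k) ^ 2 * jb 1 (kpC lam mu k) * hb 0 (kpC lam mu k))

open Finset


-- denominator identity for jb
lemma denom_nat (p : ℕ) : 2 ^ p * Nat.factorial p * ∏ q ∈ Finset.range (p + 1), (2 * q + 1)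
    = Nat.factorial (2 * p + 1) := by
  induction p with
  | zero => simp
  | succ p ih =>
    have h1 : (2*(p+1)+1).factorial = (2*p+1+1+1) * ((2*p+1+1) * (2*p+1).factorial) := by
      rw [show 2*(p+1)+1 = (2*p+1+1)+1 from by ring, Nat.factorial_succ, Nat.factorial_succ]
    rw [Finset.prod_range_succ, h1, ← ih, pow_succ, Nat.factorial_succ]
    ring

lemma denom_c (p : ℕ) : (2:ℂ) ^ p * (Nat.factorial p : ℂ) * ∏ q ∈ Finset.range (p + 1), (2 * (q:ℂ) + 1)
    = (Nat.factorial (2 * p + 1) : ℂ) := by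
  rw [← denom_nat p]
  push_cast
  ring

lemma jb_zero {z : ℂ} (hz : z ≠ 0) : jb 0 z = Complex.sin z / z := by
  have h := (Complex.hasSum_sin z).div_const z
  rw [jb, show (fun p : ℕ => ((-1 : ℂ) ^ p * z ^ (0 + 2 * p)) /
      ((2 : ℂ) ^ p * (Nat.factorial p : ℂ) * ∏ q ∈ Finset.range (0 + p + 1), (2 * (q : ℂ) + 1)))
      = (fun p : ℕ => (-1) ^ p * z ^ (2 * p + 1) / ((2*p+1).factorial : ℂ) / z) from ?_, h.tsum_eq]
  funext p
  rw [show 0 + p + 1 = p + 1 from by ring, denom_c p]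
  have h1 : ((2*p+1).factorial : ℂ) ≠ 0 := Nat.cast_ne_zero.2 (Nat.factorial_ne_zero _)
  field_simp
  ring

lemma jb_one {z : ℂ} (hz : z ≠ 0) : jb 1 z = Complex.sin z / z ^ 2 - Complex.cos z / z := by
  have h1 := (Complex.hasSum_sin z).sub ((Complex.hasSum_cos z).mul_left z)
  have h2 := (hasSum_nat_add_iff'
    (f := fun p : ℕ => (-1:ℂ) ^ p * z ^ (2*p+1) / ((2*p+1).factorial : ℂ)
      - z * ((-1) ^ p * z ^ (2*p) / ((2*p).factorial : ℂ))) 1).2 h1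
  simp only [Finset.sum_range_one] at h2
  norm_num at h2
  have h3 := h2.div_const (z ^ 2)
  have hkey : (fun p : ℕ => ((-1 : ℂ) ^ p * z ^ (1 + 2 * p)) /
      ((2 : ℂ) ^ p * (Nat.factorial p : ℂ) * ∏ q ∈ Finset.range (1 + p + 1), (2 * (q : ℂ) + 1)))
      = fun p : ℕ => ((-1:ℂ) ^ (p+1) * z ^ (2*(p+1)+1) / ((2*(p+1)+1).factorial : ℂ)
      - z * ((-1) ^ (p+1) * z ^ (2*(p+1)) / ((2*(p+1)).factorial : ℂ))) / z ^ 2 := by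
    funext p
    have e1 : (1 + p + 1) = (p + 1) + 1 := by ring
    have e2 : (2:ℂ) ^ p * (Nat.factorial p : ℂ) * ∏ q ∈ Finset.range ((p+1) + 1), (2 * (q:ℂ) + 1)
        = ((2*p+1).factorial : ℂ) * (2 * (p:ℂ) + 3) := by
      rw [Finset.prod_range_succ, ← mul_assoc, denom_c p]
      push_cast; ring
    rw [e1, e2]
    have f1 : ((2*(p+1)+1).factorial : ℂ) = (2*(p:ℂ)+3) * ((2*(p:ℂ)+2) * ((2*p+1).factorial : ℂ)) := by
      rw [show 2*(p+1)+1 = (2*p+1+1)+1 from by ring, Nat.factorial_succ, Nat.factorial_succ]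
      push_cast; ring
    have f2 : ((2*(p+1)).factorial : ℂ) = (2*(p:ℂ)+2) * ((2*p+1).factorial : ℂ) := by
      rw [show 2*(p+1) = (2*p+1)+1 from by ring, Nat.factorial_succ]
      push_cast; ring
    have hf : ((2*p+1).factorial : ℂ) ≠ 0 := Nat.cast_ne_zero.2 (Nat.factorial_ne_zero _)
    have h3 : (2*(p:ℂ)+3) ≠ 0 := by
      have := Nat.cast_ne_zero (R := ℂ).2 (show 2*p+3 ≠ 0 by omega)
      push_cast at this
      exact this
    have h2' : (2*(p:ℂ)+2) ≠ 0 := by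
      have := Nat.cast_ne_zero (R := ℂ).2 (show 2*p+2 ≠ 0 by omega)
      push_cast at this
      exact this
    have hp : z ^ (2*(p+1)+1) = z ^ (1+2*p) * z^2 := by ring
    have hp2 : z ^ (2*(p+1)) = z ^ (1+2*p) * z := by ring
    rw [f1, f2, hp, hp2, ← mul_div_assoc,
      div_sub_div _ _ (mul_ne_zero h3 (mul_ne_zero h2' hf)) (mul_ne_zero h2' hf), div_div,
      div_eq_div_iff (mul_ne_zero hf h3)
        (mul_ne_zero (mul_ne_zero (mul_ne_zero h3 (mul_ne_zero h2' hf)) (mul_ne_zero h2' hf))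
          (pow_ne_zero 2 hz))]
    ring
  rw [jb, hkey, h3.tsum_eq]
  field_simp [hz]

lemma denom_y0 (p : ℕ) : (2:ℂ)^p * (p.factorial : ℂ) * ∏ q ∈ Finset.Icc 1 p, (2*(q:ℂ) - 1)
    = ((2*p).factorial : ℂ) := by
  induction p with
  | zero => simp
  | succ p ih =>
    rw [Finset.prod_Icc_succ_top (Nat.le_add_left 1 p)]
    have f1 : ((2*(p+1)).factorial : ℂ) = (2*(p:ℂ)+2) * ((2*(p:ℂ)+1) * ((2*p).factorial : ℂ)) := by
      rw [show 2*(p+1) = (2*p+1)+1 from by ring, Nat.factorial_succ, Nat.factorial_succ]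
      push_cast; ring
    rw [f1, ← ih, pow_succ, Nat.factorial_succ]
    push_cast; ring

lemma yb_zero {z : ℂ} (hz : z ≠ 0) : yb 0 z = -Complex.cos z / z := by
  have h := (Complex.hasSum_cos z).div_const z
  have hkey : (fun p : ℕ => ((-1 : ℂ) ^ p * z ^ (2 * (p : ℤ) - ((0:ℕ) : ℤ) - 1)) /
      ((2 : ℂ) ^ p * (Nat.factorial p : ℂ) *
        ∏ q ∈ Finset.Icc 1 p, (-2 * ((0:ℕ) : ℂ) + 2 * (q : ℂ) - 1)))
      = fun p : ℕ => (-1) ^ p * z ^ (2*p) / (((2*p).factorial : ℂ)) / z := by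
    funext p
    have e1 : ∏ q ∈ Finset.Icc 1 p, (-2 * ((0:ℕ) : ℂ) + 2 * (q : ℂ) - 1)
        = ∏ q ∈ Finset.Icc 1 p, (2 * (q : ℂ) - 1) := by
      refine Finset.prod_congr rfl fun q _ => by push_cast; ring
    have e2 : z ^ (2 * (p : ℤ) - ((0:ℕ) : ℤ) - 1) = z ^ (2*p) / z := by
      rw [show 2 * (p : ℤ) - ((0:ℕ) : ℤ) - 1 = ((2*p : ℕ) : ℤ) - 1 from by push_cast; ring,
        zpow_sub₀ hz, zpow_natCast, zpow_one]
    rw [e1, denom_y0, e2]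
    ring
  rw [yb, hkey, h.tsum_eq]
  norm_num [Nat.factorial]
  rw [neg_div]

lemma denom_y1 (p : ℕ) : (2:ℂ)^(p+1) * ((p+1).factorial : ℂ) *
    ∏ q ∈ Finset.Icc 1 (p+1), (2*(q:ℂ) - 3) = -((2*(p:ℂ)+2) * ((2*p).factorial : ℂ)) := by
  induction p with
  | zero => norm_num [Nat.factorial]
  | succ p ih =>
    have f1 : ((2*(p+1)).factorial : ℂ) = (2*(p:ℂ)+2) * ((2*(p:ℂ)+1) * ((2*p).factorial : ℂ)) := by
      rw [show 2*(p+1) = (2*p+1)+1 from by ring, Nat.factorial_succ, Nat.factorial_succ]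
      push_cast; ring
    calc (2:ℂ)^(p+1+1) * ((p+1+1).factorial : ℂ) * ∏ q ∈ Finset.Icc 1 (p+1+1), (2*(q:ℂ) - 3)
        = ((2:ℂ)^(p+1) * ((p+1).factorial : ℂ) * ∏ q ∈ Finset.Icc 1 (p+1), (2*(q:ℂ) - 3)) *
          (2 * ((p:ℂ)+2) * (2*((p:ℂ)+1+1) - 3)) := by
          rw [Finset.prod_Icc_succ_top (Nat.le_add_left 1 (p+1)), pow_succ, Nat.factorial_succ]
          push_cast; ring
      _ = -((2*((p+1:ℕ):ℂ)+2) * ((2*(p+1)).factorial : ℂ)) := by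
          rw [ih, f1]; push_cast; ring

lemma yb_one {z : ℂ} (hz : z ≠ 0) : yb 1 z = -Complex.cos z / z ^ 2 - Complex.sin z / z := by
  set t : ℕ → ℂ := fun p => ((-1 : ℂ) ^ p * z ^ (2 * (p : ℤ) - ((1:ℕ) : ℤ) - 1)) /
      ((2 : ℂ) ^ p * (Nat.factorial p : ℂ) *
        ∏ q ∈ Finset.Icc 1 p, (-2 * ((1:ℕ) : ℂ) + 2 * (q : ℂ) - 1)) with ht
  have hc := (hasSum_nat_add_iff'
    (f := fun p : ℕ => ((-1:ℂ)^p * z^(2*p) / (((2*p).factorial : ℂ))) / z^2) 1).2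
    ((Complex.hasSum_cos z).div_const (z^2))
  simp only [Finset.sum_range_one] at hc
  norm_num at hc
  have hs := (Complex.hasSum_sin z).div_const z
  have h := hc.add hs
  have hterm : ∀ p : ℕ, t (p+1) =
      ((-1:ℂ)^(p+1) * z^(2*(p+1)) / (((2*(p+1)).factorial : ℂ))) / z^2
      + ((-1:ℂ)^p * z^(2*p+1) / (((2*p+1).factorial : ℂ))) / z := by
    intro p
    have e1 : ∏ q ∈ Finset.Icc 1 (p+1), (-2 * ((1:ℕ) : ℂ) + 2 * (q : ℂ) - 1)
        = ∏ q ∈ Finset.Icc 1 (p+1), (2 * (q : ℂ) - 3) := by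
      refine Finset.prod_congr rfl fun q _ => by push_cast; ring
    have e2 : z ^ (2 * ((p+1 : ℕ) : ℤ) - ((1:ℕ) : ℤ) - 1) = z ^ (2*p) := by
      rw [show 2 * ((p+1 : ℕ) : ℤ) - ((1:ℕ) : ℤ) - 1 = ((2*p : ℕ) : ℤ) from by push_cast; ring,
        zpow_natCast]
    have f1 : ((2*(p+1)).factorial : ℂ) = (2*(p:ℂ)+2) * ((2*(p:ℂ)+1) * ((2*p).factorial : ℂ)) := by
      rw [show 2*(p+1) = (2*p+1)+1 from by ring, Nat.factorial_succ, Nat.factorial_succ]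
      push_cast; ring
    have f2 : ((2*p+1).factorial : ℂ) = (2*(p:ℂ)+1) * ((2*p).factorial : ℂ) := by
      rw [Nat.factorial_succ]; push_cast; ring
    have hF : ((2*p).factorial : ℂ) ≠ 0 := Nat.cast_ne_zero.2 (Nat.factorial_ne_zero _)
    have h1 : (2*(p:ℂ)+1) ≠ 0 := by
      have := Nat.cast_ne_zero (R := ℂ).2 (show 2*p+1 ≠ 0 by omega)
      push_cast at this; exact this
    have h2 : (2*(p:ℂ)+2) ≠ 0 := by
      have := Nat.cast_ne_zero (R := ℂ).2 (show 2*p+2 ≠ 0 by omega)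
      push_cast at this; exact this
    have hp1 : z ^ (2*(p+1)) = z ^ (2*p) * z^2 := by ring
    have hp2 : z ^ (2*p+1) = z ^ (2*p) * z := by ring
    rw [ht]
    simp only
    have hD1 : (2*(p:ℂ)+2) * ((2*(p:ℂ)+1) * ((2*p).factorial:ℂ)) * z^2 ≠ 0 :=
      mul_ne_zero (mul_ne_zero h2 (mul_ne_zero h1 hF)) (pow_ne_zero 2 hz)
    have hD2 : (2*(p:ℂ)+1) * ((2*p).factorial:ℂ) * z ≠ 0 := mul_ne_zero (mul_ne_zero h1 hF) hz
    rw [e1, denom_y1, e2, f1, f2, hp1, hp2, div_div, div_div, div_add_div _ _ hD1 hD2,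
      div_eq_div_iff (neg_ne_zero.2 (mul_ne_zero h2 hF)) (mul_ne_zero hD1 hD2)]
    ring
  have h' : HasSum (fun p : ℕ => t (p+1))
      ((Complex.cos z / z^2 + Complex.sin z / z) - ∑ i ∈ Finset.range 1, t i) := by
    have hsum0 : ∑ i ∈ Finset.range 1, t i = 1 / z^2 := by
      rw [Finset.sum_range_one, ht]
      simp only
      norm_num
    rw [hsum0]
    have : (fun p : ℕ => t (p+1)) = fun p : ℕ =>
        (((-1:ℂ)^(p+1) * z^(2*(p+1)) / (((2*(p+1)).factorial : ℂ))) / z^2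
          + ((-1:ℂ)^p * z^(2*p+1) / (((2*p+1).factorial : ℂ))) / z) := funext hterm
    rw [this]
    convert h using 1
    · rfl
    · ring
  have htot := (hasSum_nat_add_iff' (f := t) 1).1 h'
  rw [yb, show (∑' p : ℕ, t p) = Complex.cos z / z^2 + Complex.sin z / z from htot.tsum_eq]
  norm_num [Nat.factorial]
  ring

set_option maxHeartbeats 4000000 in
lemma key_eq (lam mu : ℝ) (z : ℂ) (hz : z ≠ 0) (hL : (lam:ℂ) + 2*(mu:ℂ) ≠ 0) :
    (Complex.I * (4 * (mu:ℂ) * z * jb 1 z * hb 1 z / ((lam:ℂ) + 2*(mu:ℂ)) -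
        z^2 * jb 1 z * hb 0 z)
      - (4 * (mu:ℂ) / (3*((lam:ℂ)+2*(mu:ℂ))) -
        (5*(lam:ℂ)+2*(mu:ℂ)) * z^2 / (15*((lam:ℂ)+2*(mu:ℂ))))) * (2*((lam:ℂ)+2*(mu:ℂ))*z^3)
    = z^6 * ((-2*Complex.I*(lam:ℂ)/3 - 4*Complex.I*(mu:ℂ)/5)
          + (2*(lam:ℂ)/5 - 4*(mu:ℂ)/15)*z
          + (4*Complex.I*(lam:ℂ)/15 + 8*Complex.I*(mu:ℂ)/15)*z^2)
      + ((Complex.exp (z*Complex.I))^2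
          - (1 + 2*Complex.I*z - 2*z^2 - (4/3)*Complex.I*z^3 + (2/3)*z^4 + (4/15)*Complex.I*z^5))
        * ((1 - Complex.I*z) * (-4*(mu:ℂ)*(Complex.I+z) + Complex.I*((lam:ℂ)+2*(mu:ℂ))*z^2)) := by
  have hI2 : Complex.I^2 = -1 := Complex.I_sq
  have hI3 : Complex.I^3 = -Complex.I := by rw [pow_succ, hI2]; ring
  have hI4 : Complex.I^4 = 1 := by rw [pow_succ, hI3]; linear_combination -hI2
  have hI5 : Complex.I^5 = Complex.I := by rw [pow_succ, hI4]; ring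
  have hI6 : Complex.I^6 = -1 := by rw [pow_succ, hI5]; linear_combination hI2
  have hI7 : Complex.I^7 = -Complex.I := by rw [pow_succ, hI6]; ring
  have hI8 : Complex.I^8 = 1 := by rw [pow_succ, hI7]; linear_combination -hI2
  obtain ⟨e, hedef⟩ : ∃ w : ℂ, w = Complex.exp (z * Complex.I) := ⟨_, rfl⟩
  rw [show Complex.exp (z * Complex.I) = e from hedef.symm]
  have he : e ≠ 0 := by rw [hedef]; exact Complex.exp_ne_zero _
  have hE : e = Complex.cos z + Complex.sin z * Complex.I := by
    rw [hedef]; exact Complex.exp_mul_I z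
  have hEi : e⁻¹ = Complex.cos z - Complex.sin z * Complex.I := by
    rw [hedef, ← Complex.exp_neg, show -(z*Complex.I) = (-z)*Complex.I from by ring,
      Complex.exp_mul_I, Complex.cos_neg, Complex.sin_neg]
    ring
  have hsin : Complex.sin z = (e⁻¹ - e) * Complex.I / 2 := by
    rw [hEi, hE]; linear_combination Complex.sin z * hI2
  have hcos : Complex.cos z = (e + e⁻¹) / 2 := by rw [hEi, hE]; ring
  have hJ1 : jb 1 z = ((1 - e^2)*Complex.I/2 - z*(e^2+1)/2) / (z^2 * e) := by
    rw [eq_div_iff (mul_ne_zero (pow_ne_zero 2 hz) he), jb_one hz, hsin, hcos]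
    field_simp
    try simp only [hI2, hI3, hI4, hI5, hI6, hI7, hI8]
    try ring
  have hH0 : hb 0 z = (-Complex.I*e) / z := by
    rw [eq_div_iff hz, hb, jb_zero hz, yb_zero hz, hsin, hcos]
    field_simp
    ring_nf
    try simp only [hI2, hI3, hI4, hI5, hI6, hI7, hI8]
    try ring
  have hH1 : hb 1 z = (-(Complex.I + z)*e) / z^2 := by
    rw [eq_div_iff (pow_ne_zero 2 hz), hb, jb_one hz, yb_one hz, hsin, hcos]
    field_simp
    ring_nf
    try simp only [hI2, hI3, hI4, hI5, hI6, hI7, hI8]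
    try ring
  have m1 : z^4 * jb 1 z * hb 1 z
      = ((1 - e^2)*Complex.I/2 - z*(e^2+1)/2) * (-(Complex.I + z)) := by
    rw [hJ1, hH1, ← mul_div_assoc, ← mul_div_assoc, div_mul_eq_mul_div, div_div,
      div_eq_iff (mul_ne_zero (mul_ne_zero (pow_ne_zero 2 hz) he) (pow_ne_zero 2 hz))]
    ring
  have m2 : z^3 * jb 1 z * hb 0 z
      = ((1 - e^2)*Complex.I/2 - z*(e^2+1)/2) * (-Complex.I) := by
    rw [hJ1, hH0, ← mul_div_assoc, ← mul_div_assoc, div_mul_eq_mul_div, div_div,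
      div_eq_iff (mul_ne_zero (mul_ne_zero (pow_ne_zero 2 hz) he) hz)]
    ring
  have hLc : ((lam + 2*mu : ℝ) : ℂ) = (lam:ℂ) + 2*(mu:ℂ) := by push_cast; ring
  have hLcne : ((lam + 2*mu : ℝ) : ℂ) ≠ 0 := by rw [hLc]; exact hL
  rw [← hLc, show (lam:ℂ) = ((lam + 2*mu : ℝ) : ℂ) - 2*(mu:ℂ) from by push_cast; ring]
  generalize ((lam + 2*mu : ℝ) : ℂ) = Lc at hLcne ⊢
  calc (Complex.I * (4 * (mu:ℂ) * z * jb 1 z * hb 1 z / Lc - z^2 * jb 1 z * hb 0 z)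
      - (4 * (mu:ℂ) / (3*Lc) - (5*(Lc - 2*(mu:ℂ))+2*(mu:ℂ)) * z^2 / (15*Lc))) * (2*Lc*z^3)
      = (Lc/Lc) * (8*(mu:ℂ)*Complex.I*(z^4 * jb 1 z * hb 1 z))
        - 2*Lc*Complex.I*z^2*(z^3 * jb 1 z * hb 0 z)
        - (Lc/Lc) * (8*(mu:ℂ)*z^3/3)
        + (Lc/Lc) * (2*(5*(Lc - 2*(mu:ℂ))+2*(mu:ℂ))*z^5/15) := by ring
    _ = z^6 * ((-2*Complex.I*((Lc - 2*(mu:ℂ)))/3 - 4*Complex.I*(mu:ℂ)/5)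
          + (2*((Lc - 2*(mu:ℂ)))/5 - 4*(mu:ℂ)/15)*z
          + (4*Complex.I*((Lc - 2*(mu:ℂ)))/15 + 8*Complex.I*(mu:ℂ)/15)*z^2)
      + (e^2
          - (1 + 2*Complex.I*z - 2*z^2 - (4/3)*Complex.I*z^3 + (2/3)*z^4 + (4/15)*Complex.I*z^5))
        * ((1 - Complex.I*z) * (-4*(mu:ℂ)*(Complex.I+z) + Complex.I*Lc*z^2)) := by
        rw [div_self hLcne, m1, m2]
        ring_nf
        try simp only [hI2, hI3, hI4, hI5, hI6, hI7, hI8]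
        try ring

set_option maxHeartbeats 1000000 in
/-- Asymptotic expansion of ρ₀(k):
ρ₀(k) = 4μ/(3(λ+2μ)) − (5λ+2μ)k_p²/(15(λ+2μ)) + O(k³). -/
theorem rho0_asymptotic (lam mu : ℝ) (hmu : 0 < mu) (hlm : 0 < 3 * lam + 2 * mu) :
    ∃ δ > (0 : ℝ), ∃ C > (0 : ℝ), ∀ k : ℝ, 0 < k → k < δ →
      ‖rho0 lam mu k - (4 * (mu : ℂ) / (3 * ((lam : ℂ) + 2 * (mu : ℂ))) -
          (5 * (lam : ℂ) + 2 * (mu : ℂ)) * (kpC lam mu k) ^ 2 /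
            (15 * ((lam : ℂ) + 2 * (mu : ℂ))))‖
        ≤ C * k ^ 3 := by
  have hI2 : Complex.I^2 = -1 := Complex.I_sq
  have hI3 : Complex.I^3 = -Complex.I := by rw [pow_succ, hI2]; ring
  have hI4 : Complex.I^4 = 1 := by rw [pow_succ, hI3]; linear_combination -hI2
  have hI5 : Complex.I^5 = Complex.I := by rw [pow_succ, hI4]; ring
  have hL : 0 < lam + 2 * mu := by nlinarith
  set s := Real.sqrt (lam + 2*mu) with hsdef
  have hs : 0 < s := Real.sqrt_pos.2 hL
  have hs2 : s^2 = lam + 2*mu := Real.sq_sqrt hL.le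
  have hLC : ((lam:ℂ) + 2*(mu:ℂ)) ≠ 0 := by
    have h1 : ((lam + 2*mu : ℝ) : ℂ) ≠ 0 := Complex.ofReal_ne_zero.2 (ne_of_gt hL)
    intro h
    apply h1
    push_cast
    linear_combination h
  set c0 : ℂ := -2*Complex.I*(lam:ℂ)/3 - 4*Complex.I*(mu:ℂ)/5 with hc0
  set c1 : ℂ := 2*(lam:ℂ)/5 - 4*(mu:ℂ)/15 with hc1
  set c2 : ℂ := 4*Complex.I*(lam:ℂ)/15 + 8*Complex.I*(mu:ℂ)/15 with hc2
  set CS : ℝ := ‖c0‖ + ‖c1‖ + ‖c2‖ with hCS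
  set CQ : ℝ := 2*(8*mu + (lam+2*mu)) with hCQ
  have hCS0 : 0 ≤ CS := by positivity
  have hCQ0 : 0 < CQ := by nlinarith
  refine ⟨min 1 (s/2), by positivity,
    (CS + CQ + 1)/(2*(lam+2*mu)^2*s), div_pos (by linarith) (by positivity), fun k hk hkδ => ?_⟩
  have hks : k < s/2 := lt_of_lt_of_le hkδ (min_le_right _ _)
  set x := k/s with hxdef
  have hx0 : 0 < x := div_pos hk hs
  have hxh : x < 1/2 := by rw [hxdef, div_lt_iff₀ hs]; linarith
  have hx1 : x ≤ 1 := by linarith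
  set z := kpC lam mu k with hzdef
  have hzx : z = ((x : ℝ) : ℂ) := by rw [hzdef, kpC, hxdef, hsdef]
  have hzne : z ≠ 0 := by rw [hzx]; exact Complex.ofReal_ne_zero.2 (ne_of_gt hx0)
  have hznorm : ‖z‖ = x := by
    rw [hzx, Complex.norm_real, Real.norm_eq_abs, abs_of_pos hx0]
  have hden : (2*((lam:ℂ)+2*(mu:ℂ))*z^3) ≠ 0 :=
    mul_ne_zero (mul_ne_zero two_ne_zero hLC) (pow_ne_zero 3 hzne)
  have hkey := key_eq lam mu z hzne hLC
  have hdiff : rho0 lam mu k - (4 * (mu : ℂ) / (3 * ((lam : ℂ) + 2 * (mu : ℂ))) -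
      (5 * (lam : ℂ) + 2 * (mu : ℂ)) * (kpC lam mu k) ^ 2 /
        (15 * ((lam : ℂ) + 2 * (mu : ℂ))))
      = (z^6 * (c0 + c1*z + c2*z^2)
        + ((Complex.exp (z*Complex.I))^2
          - (1 + 2*Complex.I*z - 2*z^2 - (4/3)*Complex.I*z^3 + (2/3)*z^4 + (4/15)*Complex.I*z^5))
        * ((1 - Complex.I*z) * (-4*(mu:ℂ)*(Complex.I+z) + Complex.I*((lam:ℂ)+2*(mu:ℂ))*z^2)))
        / (2*((lam:ℂ)+2*(mu:ℂ))*z^3) := by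
    rw [eq_div_iff hden, rho0, ← hzdef, hc0, hc1, hc2]
    exact hkey
  rw [hdiff, norm_div]
  have hDnorm : ‖(2*((lam:ℂ)+2*(mu:ℂ))*z^3 : ℂ)‖ = 2*(lam+2*mu)*x^3 := by
    rw [norm_mul, norm_mul, norm_pow, hznorm,
      show ((lam:ℂ)+2*(mu:ℂ)) = ((lam+2*mu : ℝ) : ℂ) from by push_cast; ring]
    simp only [Complex.norm_real, Real.norm_eq_abs, Complex.norm_two, abs_of_pos hL]
    try ring
  rw [hDnorm]
  -- bound on S
  have hSb : ‖c0 + c1*z + c2*z^2‖ ≤ CS := by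
    calc ‖c0 + c1*z + c2*z^2‖ ≤ ‖c0 + c1*z‖ + ‖c2*z^2‖ := norm_add_le _ _
    _ ≤ ‖c0‖ + ‖c1*z‖ + ‖c2*z^2‖ := by linarith [norm_add_le c0 (c1*z)]
    _ ≤ ‖c0‖ + ‖c1‖ + ‖c2‖ := by
        have h1 : ‖c1*z‖ ≤ ‖c1‖ := by
          rw [norm_mul, hznorm]
          exact mul_le_of_le_one_right (norm_nonneg _) hx1
        have h2 : ‖c2*z^2‖ ≤ ‖c2‖ := by
          rw [norm_mul, norm_pow, hznorm]
          exact mul_le_of_le_one_right (norm_nonneg _) (pow_le_one₀ hx0.le hx1)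
        linarith
    _ = CS := hCS.symm
  -- bound on the exp remainder
  have hw : (Complex.exp (z*Complex.I))^2 = Complex.exp (2*Complex.I*z) := by
    rw [sq, ← Complex.exp_add]
    congr 1
    ring
  have hT6 : (1 + 2*Complex.I*z - 2*z^2 - (4/3)*Complex.I*z^3 + (2/3)*z^4 + (4/15)*Complex.I*z^5)
      = ∑ m ∈ Finset.range 6, (2*Complex.I*z)^m / (m.factorial : ℂ) := by
    simp [Finset.sum_range_succ, Nat.factorial]
    ring_nf
    simp only [hI2, hI3, hI4, hI5]
    ring
  have huabs : ‖2*Complex.I*z‖ = 2*x := by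
    rw [norm_mul, norm_mul, Complex.norm_two, Complex.norm_I, hznorm]
    ring
  have hu1 : ‖2*Complex.I*z‖ ≤ 1 := by rw [huabs]; linarith
  have hWb : ‖(Complex.exp (z*Complex.I))^2
      - (1 + 2*Complex.I*z - 2*z^2 - (4/3)*Complex.I*z^3 + (2/3)*z^4 + (4/15)*Complex.I*z^5)‖
      ≤ x^6 := by
    rw [hw, hT6]
    have hEb := Complex.exp_bound hu1 (n := 6) (by norm_num)
    calc ‖Complex.exp (2*Complex.I*z) - ∑ m ∈ Finset.range 6,
          (2*Complex.I*z)^m / (m.factorial : ℂ)‖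
        ≤ ‖2*Complex.I*z‖ ^ 6 * ((Nat.succ 6 : ℝ) * ((Nat.factorial 6 : ℝ) * 6)⁻¹) := hEb
      _ = (2*x)^6 * (7 * (720*6:ℝ)⁻¹) := by rw [huabs]; norm_num [Nat.factorial]
      _ ≤ x^6 := by nlinarith [pow_nonneg hx0.le 6, pow_nonneg hx0.le 3]
  -- bound on Y
  have hYb : ‖(1 - Complex.I*z) * (-4*(mu:ℂ)*(Complex.I+z) + Complex.I*((lam:ℂ)+2*(mu:ℂ))*z^2)‖
      ≤ CQ := by
    rw [norm_mul]
    have h1 : ‖1 - Complex.I*z‖ ≤ 2 := by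
      calc ‖1 - Complex.I*z‖ ≤ ‖(1:ℂ)‖ + ‖Complex.I*z‖ := norm_sub_le _ _
        _ = 1 + x := by
            rw [norm_one, norm_mul, Complex.norm_I, hznorm]
            ring
        _ ≤ 2 := by linarith
    have h2 : ‖-4*(mu:ℂ)*(Complex.I+z) + Complex.I*((lam:ℂ)+2*(mu:ℂ))*z^2‖
        ≤ 8*mu + (lam+2*mu) := by
      calc ‖-4*(mu:ℂ)*(Complex.I+z) + Complex.I*((lam:ℂ)+2*(mu:ℂ))*z^2‖
          ≤ ‖-4*(mu:ℂ)*(Complex.I+z)‖ + ‖Complex.I*((lam:ℂ)+2*(mu:ℂ))*z^2‖ := norm_add_le _ _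
        _ ≤ 8*mu + (lam+2*mu) := by
            have ha : ‖-4*(mu:ℂ)*(Complex.I+z)‖ ≤ 8*mu := by
              rw [norm_mul, show (-4*(mu:ℂ)) = ((-4*mu : ℝ) : ℂ) from by push_cast; ring,
                Complex.norm_real, Real.norm_eq_abs]
              have hiz : ‖Complex.I+z‖ ≤ 2 := by
                calc ‖Complex.I+z‖ ≤ ‖Complex.I‖ + ‖z‖ := norm_add_le _ _
                  _ = 1 + x := by rw [Complex.norm_I, hznorm]
                  _ ≤ 2 := by linarith
              calc |(-4*mu : ℝ)| * ‖Complex.I+z‖ ≤ (4*mu) * 2 := by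
                    apply mul_le_mul _ hiz (norm_nonneg _) (by positivity)
                    rw [abs_of_nonpos (by nlinarith)]
                    linarith
                _ = 8*mu := by ring
            have hb2 : ‖Complex.I*((lam:ℂ)+2*(mu:ℂ))*z^2‖ ≤ (lam+2*mu) := by
              rw [norm_mul, norm_mul, Complex.norm_I, one_mul,
                show ((lam:ℂ)+2*(mu:ℂ)) = ((lam+2*mu : ℝ) : ℂ) from by push_cast; ring,
                Complex.norm_real, Real.norm_eq_abs, abs_of_pos hL, norm_pow, hznorm]
              calc (lam+2*mu) * x^2 ≤ (lam+2*mu) * 1 :=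
                    mul_le_mul_of_nonneg_left (pow_le_one₀ hx0.le hx1) hL.le
                _ = lam+2*mu := by ring
            linarith
    calc ‖1 - Complex.I*z‖ * ‖-4*(mu:ℂ)*(Complex.I+z) + Complex.I*((lam:ℂ)+2*(mu:ℂ))*z^2‖
        ≤ 2 * (8*mu + (lam+2*mu)) := by
          apply mul_le_mul h1 h2 (norm_nonneg _) (by norm_num)
      _ = CQ := hCQ.symm
  -- combine
  have hNb : ‖z^6 * (c0 + c1*z + c2*z^2)
      + ((Complex.exp (z*Complex.I))^2
        - (1 + 2*Complex.I*z - 2*z^2 - (4/3)*Complex.I*z^3 + (2/3)*z^4 + (4/15)*Complex.I*z^5))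
      * ((1 - Complex.I*z) * (-4*(mu:ℂ)*(Complex.I+z) + Complex.I*((lam:ℂ)+2*(mu:ℂ))*z^2))‖
      ≤ (CS + CQ) * x^6 := by
    calc ‖_ + _‖ ≤ ‖z^6 * (c0 + c1*z + c2*z^2)‖
        + ‖((Complex.exp (z*Complex.I))^2
        - (1 + 2*Complex.I*z - 2*z^2 - (4/3)*Complex.I*z^3 + (2/3)*z^4 + (4/15)*Complex.I*z^5))
      * ((1 - Complex.I*z) * (-4*(mu:ℂ)*(Complex.I+z) + Complex.I*((lam:ℂ)+2*(mu:ℂ))*z^2))‖ :=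
        norm_add_le _ _
      _ ≤ x^6 * CS + x^6 * CQ := by
          rw [norm_mul, norm_mul, norm_pow, hznorm]
          have h2 := mul_le_mul hWb hYb (norm_nonneg _) (pow_nonneg hx0.le 6)
          have h1 := mul_le_mul_of_nonneg_left hSb (pow_nonneg hx0.le 6)
          exact add_le_add h1 h2
      _ = (CS + CQ) * x^6 := by ring
  have hpos : (0:ℝ) < 2*(lam+2*mu)*x^3 := by positivity
  rw [div_le_iff₀ hpos]
  have harith : (CS + CQ + 1)/(2*(lam+2*mu)^2*s) * k^3 * (2*(lam+2*mu)*x^3)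
      = (CS + CQ + 1) * x^6 := by
    have hk3 : k = x*s := by rw [hxdef]; field_simp
    rw [hk3, ← hs2]
    field_simp
  calc ‖_‖ ≤ (CS + CQ) * x^6 := hNb
    _ ≤ (CS + CQ + 1) * x^6 := by nlinarith [pow_nonneg hx0.le 6]
    _ = (CS + CQ + 1)/(2*(lam+2*mu)^2*s) * k^3 * (2*(lam+2*mu)*x^3) := harith.symm
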